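/- Suppose M < 0, N < 0 and δ₁/K₀ > δ₂, and suppose the function y ↦ G(M,p,y) has a smallest positive zero q₁ which satisfies q₁ < 1/√|N|. Then the transcendental equation G(M,p,y) = y + N·y³ has at least two distinct positive solutions, one of which lies in the interval (0, 1/√|N|). -/
import Mathlib


open Real MeasureTheory Filter Set

/-- `g p y = ∫₀^y exp(−r² + p·r·y) dr`. -/
noncomputable def g (p y : ℝ) : ℝ := ∫ r in (0:ℝ)..y, Real.exp (-r^2 + p*r*y)

/-- Complementary error function `erfc z = (2/√π)∫_z^∞ exp(−r²) dr`. -/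
noncomputable def erfc (z : ℝ) : ℝ := (2 / Real.sqrt π) * ∫ r in Set.Ioi z, Real.exp (-r^2)

/-- `G₁(p,y) = exp((p−1)y²)/(K₀ + g(p,y))`. -/
noncomputable def G₁ (K₀ p y : ℝ) : ℝ := Real.exp ((p-1)*y^2) / (K₀ + g p y)

/-- `G₂(y) = exp(−γ₀²y²)/erfc(γ₀y)`. -/
noncomputable def G₂ (γ₀ y : ℝ) : ℝ := Real.exp (-(γ₀^2*y^2)) / erfc (γ₀*y)

/-- `G(M,p,y) = δ₁(1 − (A·M/B)y²)G₁(p,y) − δ₂(1 + M·y²)G₂(y)`. -/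
noncomputable def Gfun (A B δ₁ δ₂ K₀ γ₀ M p y : ℝ) : ℝ :=
  δ₁ * (1 - A*M/B * y^2) * G₁ K₀ p y - δ₂ * (1 + M*y^2) * G₂ γ₀ y

lemma integrable_gauss : Integrable (fun r : ℝ => Real.exp (-r^2)) := by
  simpa using integrable_exp_neg_mul_sq (one_pos)

lemma erfc_pos (z : ℝ) : 0 < erfc z := by
  have h1 : 0 < ∫ r in Set.Ioi z, Real.exp (-r^2) := by
    rw [setIntegral_pos_iff_support_of_nonneg_ae]
    · have : Function.support (fun r : ℝ => Real.exp (-r^2)) = Set.univ := by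
        ext r; simp [Function.support, (Real.exp_pos _).ne']
      rw [this]
      simp [Set.univ_inter]
    · filter_upwards with r using (Real.exp_pos _).le
    · exact integrable_gauss.integrableOn
  have h2 : 0 < 2 / Real.sqrt π := by positivity
  exact mul_pos h2 h1

lemma erfc_zero : erfc 0 = 1 := by
  have : (∫ r in Set.Ioi (0:ℝ), Real.exp (-r^2)) = Real.sqrt π / 2 := by
    simpa using integral_gaussian_Ioi 1
  rw [erfc, this]
  have : Real.sqrt π ≠ 0 := by positivity
  field_simp

lemma erfc_cont : Continuous erfc := by
  have key : ∀ z : ℝ, (∫ r in Set.Ioi z, Real.exp (-r^2))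
      = (∫ r : ℝ, Real.exp (-r^2)) - ((∫ r in Set.Iic (0:ℝ), Real.exp (-r^2))
        + ∫ r in (0:ℝ)..z, Real.exp (-r^2)) := by
    intro z
    have h1 : (∫ r in Set.Iic z, Real.exp (-r^2)) + (∫ r in Set.Ioi z, Real.exp (-r^2))
        = ∫ r : ℝ, Real.exp (-r^2) :=
      intervalIntegral.integral_Iic_add_Ioi integrable_gauss.integrableOn
        integrable_gauss.integrableOn
    have h2 : (∫ r in Set.Iic z, Real.exp (-r^2)) - (∫ r in Set.Iic (0:ℝ), Real.exp (-r^2))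
        = ∫ r in (0:ℝ)..z, Real.exp (-r^2) :=
      intervalIntegral.integral_Iic_sub_Iic integrable_gauss.integrableOn
        integrable_gauss.integrableOn
    linarith
  unfold erfc
  apply continuous_const.mul
  simp_rw [key]
  apply continuous_const.sub
  apply continuous_const.add
  exact intervalIntegral.continuous_primitive
    (fun a b => (Real.continuous_exp.comp (by continuity)).intervalIntegrable a b) 0

lemma g_cont (p : ℝ) : Continuous (fun y => g p y) := by
  unfold g
  exact intervalIntegral.continuous_parametric_intervalIntegral_of_continuous
    (f := fun y r => Real.exp (-r^2 + p*r*y)) (by fun_prop) continuous_id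

lemma g_nonneg (p : ℝ) {y : ℝ} (hy : 0 ≤ y) : 0 ≤ g p y :=
  intervalIntegral.integral_nonneg hy (fun _ _ => (Real.exp_pos _).le)

noncomputable def Ffun (A B δ₁ δ₂ K₀ γ₀ M N p y : ℝ) : ℝ :=
  Gfun A B δ₁ δ₂ K₀ γ₀ M p y - (y + N * y^3)

set_option maxHeartbeats 1000000 in
/-- If `M < 0`, `N < 0`, `δ₁/K₀ > δ₂` and `y ↦ G(M,p,y)` has a smallest
positive zero `q₁ < 1/√|N|`, then the transcendental equation has at least two distinct
positive solutions, one of which lies in `(0, 1/√|N|)`. -/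
theorem stmt7 (A B δ₁ δ₂ K₀ γ₀ M N p q₁ : ℝ)
    (hA : 0 < A) (hB : 0 < B) (hδ₁ : 0 < δ₁) (hδ₂ : 0 < δ₂)
    (hK₀ : 0 < K₀) (hγ₀ : 0 < γ₀) (hM : M < 0) (hN : N < 0)
    (h : δ₂ < δ₁ / K₀)
    (hq₁pos : 0 < q₁) (hq₁zero : Gfun A B δ₁ δ₂ K₀ γ₀ M p q₁ = 0)
    (hq₁min : ∀ y : ℝ, 0 < y → y < q₁ → Gfun A B δ₁ δ₂ K₀ γ₀ M p y ≠ 0)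
    (hq₁lt : q₁ < 1 / Real.sqrt |N|) :
    ∃ ξ₁ ξ₂ : ℝ, 0 < ξ₁ ∧ 0 < ξ₂ ∧ ξ₁ ≠ ξ₂ ∧
      Gfun A B δ₁ δ₂ K₀ γ₀ M p ξ₁ = ξ₁ + N * ξ₁^3 ∧
      Gfun A B δ₁ δ₂ K₀ γ₀ M p ξ₂ = ξ₂ + N * ξ₂^3 ∧
      ξ₁ < 1 / Real.sqrt |N| := by
  have hF : ∀ y, Ffun A B δ₁ δ₂ K₀ γ₀ M N p y
      = Gfun A B δ₁ δ₂ K₀ γ₀ M p y - (y + N * y^3) := fun y => rfl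
  -- denominator positivity
  have hden : ∀ y ∈ Set.Ici (0:ℝ), K₀ + g p y ≠ 0 := fun y hy =>
    (add_pos_of_pos_of_nonneg hK₀ (g_nonneg p hy)).ne'
  -- continuity of F on [0, ∞)
  have hc1 : ContinuousOn (fun y => Real.exp ((p-1)*y^2) / (K₀ + g p y)) (Set.Ici 0) :=
    ContinuousOn.div (by fun_prop) ((continuous_const.add (g_cont p)).continuousOn) hden
  have hc2 : Continuous (fun y => Real.exp (-(γ₀^2*y^2)) / erfc (γ₀*y)) :=
    Continuous.div (by fun_prop) (erfc_cont.comp (by fun_prop))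
      (fun y => (erfc_pos _).ne')
  have hFc : ContinuousOn (Ffun A B δ₁ δ₂ K₀ γ₀ M N p) (Set.Ici 0) := by
    unfold Ffun Gfun G₁ G₂
    exact (((by fun_prop : Continuous fun y:ℝ => δ₁*(1 - A*M/B*y^2)).continuousOn.mul hc1).sub
      ((by fun_prop : Continuous fun y:ℝ => δ₂*(1+M*y^2)).continuousOn.mul
        hc2.continuousOn)).sub (by fun_prop)
  -- value at 0
  have hF0 : 0 < Ffun A B δ₁ δ₂ K₀ γ₀ M N p 0 := by
    have hg0 : g p 0 = 0 := by simp [g]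
    have : Ffun A B δ₁ δ₂ K₀ γ₀ M N p 0 = δ₁ / K₀ - δ₂ := by
      simp [Ffun, Gfun, G₁, G₂, hg0, erfc_zero, div_eq_mul_inv]
    rw [this]; linarith
  -- sqrt facts
  obtain ⟨s, hspos, hs2, hq₁lt'⟩ : ∃ s : ℝ, 0 < s ∧ s^2 = -N ∧ q₁ < 1/s := by
    refine ⟨Real.sqrt |N|, Real.sqrt_pos.mpr (abs_pos.mpr hN.ne), ?_, hq₁lt⟩
    rw [Real.sq_sqrt (abs_nonneg N), abs_of_neg hN]
  have hq₁s : q₁ * s < 1 := by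
    have := (lt_div_iff₀ hspos).mp hq₁lt'
    linarith
  -- value at q₁
  have hFq₁ : Ffun A B δ₁ δ₂ K₀ γ₀ M N p q₁ < 0 := by
    have hpos : 0 < q₁ + N * q₁^3 := by
      have hsq : (q₁*s)^2 < 1 := by nlinarith [mul_nonneg hq₁pos.le hspos.le]
      have hNval : N = -s^2 := by linarith
      have key : 0 < q₁ * (1 - (q₁*s)^2) := mul_pos hq₁pos (by linarith)
      have expand : q₁ + N * q₁^3 = q₁ * (1 - (q₁*s)^2) := by rw [hNval]; ring
      linarith
    rw [hF, hq₁zero]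
    linarith
  -- the large point yb
  obtain ⟨t, htpos, ht2⟩ : ∃ t : ℝ, 0 < t ∧ t^2 = -M :=
    ⟨Real.sqrt (-M), Real.sqrt_pos.mpr (by linarith), Real.sq_sqrt (by linarith)⟩
  obtain ⟨yb, hybt, hybs⟩ : ∃ yb : ℝ, 1/t < yb ∧ 1/s < yb := by
    refine ⟨max (1/t) (1/s) + 1, ?_, ?_⟩
    · have := le_max_left (1/t) (1/s); linarith
    · have := le_max_right (1/t) (1/s); linarith
  have hybpos : 0 < yb := lt_trans (by positivity) hybt
  have hybt' : 1 < yb * t := by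
    have := (div_lt_iff₀ htpos).mp hybt; linarith
  have hybs' : 1 < yb * s := by
    have := (div_lt_iff₀ hspos).mp hybs; linarith
  have hMyb : 1 + M * yb^2 < 0 := by
    have hsq : 1 < (yb*t)^2 := by nlinarith [mul_pos hybpos htpos]
    have hMval : M = -t^2 := by linarith
    have expand : 1 + M * yb^2 = 1 - (yb*t)^2 := by rw [hMval]; ring
    linarith
  have hNyb : yb + N * yb^3 < 0 := by
    have hsq : 1 < (yb*s)^2 := by nlinarith [mul_pos hybpos hspos]
    have hNval : N = -s^2 := by linarith
    have key : 0 < yb * ((yb*s)^2 - 1) := mul_pos hybpos (by linarith)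
    have expand : yb + N * yb^3 = -(yb * ((yb*s)^2 - 1)) := by rw [hNval]; ring
    linarith
  -- Gfun is positive at yb
  have hG1pos : 0 < G₁ K₀ p yb := by
    have := g_nonneg p hybpos.le
    unfold G₁
    positivity
  have hG2pos : 0 < G₂ γ₀ yb := div_pos (Real.exp_pos _) (erfc_pos _)
  have hGyb : 0 < Gfun A B δ₁ δ₂ K₀ γ₀ M p yb := by
    unfold Gfun
    have h1 : 0 < 1 - A*M/B * yb^2 := by
      have h0 : A*M/B < 0 := div_neg_of_neg_of_pos (mul_neg_of_pos_of_neg hA hM) hB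
      nlinarith [mul_pos (neg_pos.mpr h0) (pow_pos hybpos 2)]
    have h2 : δ₂ * (1 + M*yb^2) < 0 := mul_neg_of_pos_of_neg hδ₂ hMyb
    have e1 : 0 < δ₁ * (1 - A*M/B * yb^2) * G₁ K₀ p yb := mul_pos (mul_pos hδ₁ h1) hG1pos
    have e2 : δ₂ * (1 + M*yb^2) * G₂ γ₀ yb < 0 := mul_neg_of_neg_of_pos h2 hG2pos
    exact sub_pos.mpr (e2.trans e1)
  have hFyb : 0 < Ffun A B δ₁ δ₂ K₀ γ₀ M N p yb := by
    rw [hF]; linarith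
  have hq₁yb : q₁ ≤ yb := by linarith
  -- first solution via IVT on [0, q₁]
  obtain ⟨ξ₁, hξ₁mem, hξ₁⟩ : ∃ ξ₁ ∈ Set.Icc (0:ℝ) q₁, Ffun A B δ₁ δ₂ K₀ γ₀ M N p ξ₁ = 0 := by
    have hsub : Set.Icc (0:ℝ) q₁ ⊆ Set.Ici 0 := Set.Icc_subset_Ici_self
    have := intermediate_value_Icc' hq₁pos.le (hFc.mono hsub)
    have h0 : (0:ℝ) ∈ Set.Icc (Ffun A B δ₁ δ₂ K₀ γ₀ M N p q₁) (Ffun A B δ₁ δ₂ K₀ γ₀ M N p 0) := ⟨hFq₁.le, hF0.le⟩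
    obtain ⟨ξ, hξmem, hξ⟩ := this h0
    exact ⟨ξ, hξmem, hξ⟩
  -- second solution via IVT on [q₁, yb]
  obtain ⟨ξ₂, hξ₂mem, hξ₂⟩ : ∃ ξ₂ ∈ Set.Icc q₁ yb, Ffun A B δ₁ δ₂ K₀ γ₀ M N p ξ₂ = 0 := by
    have hsub : Set.Icc q₁ yb ⊆ Set.Ici 0 :=
      Set.Icc_subset_Ici_self.trans (Set.Ici_subset_Ici.mpr hq₁pos.le)
    have := intermediate_value_Icc hq₁yb (hFc.mono hsub)
    have h0 : (0:ℝ) ∈ Set.Icc (Ffun A B δ₁ δ₂ K₀ γ₀ M N p q₁) (Ffun A B δ₁ δ₂ K₀ γ₀ M N p yb) := ⟨hFq₁.le, hFyb.le⟩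
    obtain ⟨ξ, hξmem, hξ⟩ := this h0
    exact ⟨ξ, hξmem, hξ⟩
  have hξ₁pos : 0 < ξ₁ := by
    rcases eq_or_lt_of_le hξ₁mem.1 with h0 | h0
    · rw [← h0] at hξ₁; linarith
    · exact h0
  have hξ₁lt : ξ₁ < q₁ := by
    rcases eq_or_lt_of_le hξ₁mem.2 with h0 | h0
    · rw [h0] at hξ₁; linarith
    · exact h0
  have hξ₂gt : q₁ < ξ₂ := by
    rcases eq_or_lt_of_le hξ₂mem.1 with h0 | h0
    · rw [← h0] at hξ₂; linarith
    · exact h0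
  refine ⟨ξ₁, ξ₂, hξ₁pos, lt_trans hq₁pos hξ₂gt, (lt_trans hξ₁lt hξ₂gt).ne, ?_, ?_, ?_⟩
  · have h' := hξ₁; rw [hF ξ₁] at h'; exact sub_eq_zero.mp h'
  · have h' := hξ₂; rw [hF ξ₂] at h'; exact sub_eq_zero.mp h'
  · exact lt_trans hξ₁lt hq₁lt
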